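/- arXiv:0910.1968 — 3 statements merged into one kernel-verified Lean document; each statement's English description precedes it below -/
import Mathlib

section
/- Let A, B, C, D, E, F be unital C*-algebras, with unital *-homomorphisms φ_A : A → D, φ_B : B → D, ψ_B : B → E, ψ_C : C → E, ι_D : D → F, ι_E : E → F satisfying ι_D ∘ φ_B = ι_E ∘ ψ_B. Let d₀ ∈ D and e₀ ∈ E with ‖d₀‖ = 1 = ‖e₀‖, and set f₀ = ι_D(d₀)·ι_E(e₀); assume f₀ ≠ 0. Define N_D(a,b) = ‖φ_A(a)·d₀ − d₀·φ_B(b)‖_D, N_E(b,c) = ‖ψ_B(b)·e₀ − e₀·ψ_C(c)‖_E, and N_F(a,c) = ‖ι_D(φ_A(a))·f₀ − f₀·ι_E(ψ_C(c))‖_F. Let L_A : A → ℝ, L_B : B → ℝ, L_C : C → ℝ be nonnegative functions, and let γ_D, γ_E > 0. Assume: (i) for every self-adjoint a ∈ A and every ε > 0 there is a self-adjoint b ∈ B with L_B(b) ≤ L_A(a) + ε and N_D(a,b) ≤ γ_D·(L_A(a) + ε), and for every self-adjoint b ∈ B and every ε > 0 there is a self-adjoint a ∈ A with L_A(a) ≤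 L_B(b) + ε and N_D(a,b) ≤ γ_D·(L_B(b) + ε); (ii) the analogous two conditions hold between B and C for N_E with constant γ_E. Then for every γ ≥ γ_D + γ_E: for every self-adjoint a ∈ A and every ε > 0 there is a self-adjoint c ∈ C with L_C(c) ≤ L_A(a) + ε and N_F(a,c) ≤ γ·(L_A(a) + ε); and for every self-adjoint c ∈ C and every ε > 0 there is a self-adjoint a ∈ A with L_A(a) ≤ L_C(c) + ε and N_F(a,c) ≤ γ·(L_C(c) + ε). -/
/-! Given `b ∈ B`, inserting `ι(φ_B b) = ι(ψ_B b)` telescopes the commutator defining `N_F` as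
`ι_D(φ_A a·d₀ − d₀·φ_B b)·ι_E e₀ + ι_D d₀·ι_E(ψ_B b·e₀ − e₀·ψ_C c)`; since *-homomorphisms
between C*-algebras are contractive and `‖d₀‖ = ‖e₀‖ = 1`, this gives
`N_F(a, c) ≤ N_D(a, b) + N_E(b, c)`. Chaining an `ε/2`-approximation through `B` then adds
the constants. -/

/-- One half of "`γ⁻¹·N` is a bridge for `(LX, LY)`"; the other half is
`IsApproxBridge LY LX (Function.swap N) γ`. -/
def IsApproxBridge {X Y : Type*} [Star X] [Star Y] (LX : X → ℝ) (LY : Y → ℝ)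
    (N : X → Y → ℝ) (γ : ℝ) : Prop :=
  ∀ x : X, IsSelfAdjoint x → ∀ ε : ℝ, 0 < ε → ∃ y : Y, IsSelfAdjoint y ∧
    LY y ≤ LX x + ε ∧ N x y ≤ γ * (LX x + ε)

theorem IsApproxBridge.trans {X Y Z : Type*} [Star X] [Star Y] [Star Z]
    {LX : X → ℝ} {LY : Y → ℝ} {LZ : Z → ℝ} {N₁ : X → Y → ℝ} {N₂ : Y → Z → ℝ}
    {N : X → Z → ℝ} {γ₁ γ₂ γ : ℝ}
    (h₁ : IsApproxBridge LX LY N₁ γ₁) (h₂ : IsApproxBridge LY LZ N₂ γ₂)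
    (hγ₁ : 0 ≤ γ₁) (hγ₂ : 0 ≤ γ₂) (hγ : γ₁ + γ₂ ≤ γ) (hLX : ∀ x, 0 ≤ LX x)
    (hN : ∀ x y z, N x z ≤ N₁ x y + N₂ y z) :
    IsApproxBridge LX LZ N γ := by
  intro x hx ε hε
  obtain ⟨y, hy, hLy, hN₁⟩ := h₁ x hx (ε / 2) (by positivity)
  obtain ⟨z, hz, hLz, hN₂⟩ := h₂ y hy (ε / 2) (by positivity)
  refine ⟨z, hz, by linarith, ?_⟩
  have hLXε : 0 ≤ LX x + ε := by linarith [hLX x]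
  calc N x z ≤ N₁ x y + N₂ y z := hN x y z
    _ ≤ γ₁ * (LX x + ε / 2) + γ₂ * (LY y + ε / 2) := add_le_add hN₁ hN₂
    _ ≤ γ₁ * (LX x + ε) + γ₂ * (LX x + ε) := by gcongr γ₁ * ?_ + γ₂ * ?_ <;> linarith
    _ = (γ₁ + γ₂) * (LX x + ε) := by ring
    _ ≤ γ * (LX x + ε) := mul_le_mul_of_nonneg_right hγ hLXε

theorem norm_amalgamated_commutator_le {B D E F : Type*}
    [Semiring B] [Algebra ℂ B] [Star B] [CStarAlgebra D] [CStarAlgebra E] [CStarAlgebra F]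
    (φB : B →⋆ₐ[ℂ] D) (ψB : B →⋆ₐ[ℂ] E) (ιD : D →⋆ₐ[ℂ] F) (ιE : E →⋆ₐ[ℂ] F)
    (hamalg : ∀ b : B, ιD (φB b) = ιE (ψB b))
    {d₀ : D} {e₀ : E} (hd₀ : ‖d₀‖ ≤ 1) (he₀ : ‖e₀‖ ≤ 1) (x : D) (b : B) (y : E) :
    ‖ιD x * (ιD d₀ * ιE e₀) - (ιD d₀ * ιE e₀) * ιE y‖ ≤
      ‖x * d₀ - d₀ * φB b‖ + ‖ψB b * e₀ - e₀ * y‖ := by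
  have telescope : ιD x * (ιD d₀ * ιE e₀) - (ιD d₀ * ιE e₀) * ιE y
      = ιD (x * d₀ - d₀ * φB b) * ιE e₀ + ιD d₀ * ιE (ψB b * e₀ - e₀ * y) := by
    simp only [map_sub, map_mul, hamalg]
    noncomm_ring
  have hιd₀ : ‖ιD d₀‖ ≤ 1 := (NonUnitalStarAlgHom.norm_apply_le ιD d₀).trans hd₀
  have hιe₀ : ‖ιE e₀‖ ≤ 1 := (NonUnitalStarAlgHom.norm_apply_le ιE e₀).trans he₀
  rw [telescope]
  calc _ ≤ ‖ιD (x * d₀ - d₀ * φB b)‖ * ‖ιE e₀‖ + ‖ιD d₀‖ * ‖ιE (ψB b * e₀ - e₀ * y)‖ :=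
        (norm_add_le _ _).trans (add_le_add (norm_mul_le _ _) (norm_mul_le _ _))
    _ ≤ ‖x * d₀ - d₀ * φB b‖ * 1 + 1 * ‖ψB b * e₀ - e₀ * y‖ := by
        gcongr
        exacts [NonUnitalStarAlgHom.norm_apply_le ιD _, NonUnitalStarAlgHom.norm_apply_le ιE _]
    _ = ‖x * d₀ - d₀ * φB b‖ + ‖ψB b * e₀ - e₀ * y‖ := by ring

theorem stmt1_general {A B C D E F : Type*}
    [NormedRing A] [StarRing A] [NormedAlgebra ℂ A]
    [NormedRing B] [StarRing B] [NormedAlgebra ℂ B]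
    [NormedRing C] [StarRing C] [NormedAlgebra ℂ C]
    [NormedRing D] [StarRing D] [CStarRing D] [NormedAlgebra ℂ D] [StarModule ℂ D] [CompleteSpace D]
    [NormedRing E] [StarRing E] [CStarRing E] [NormedAlgebra ℂ E] [StarModule ℂ E] [CompleteSpace E]
    [NormedRing F] [StarRing F] [CStarRing F] [NormedAlgebra ℂ F] [StarModule ℂ F] [CompleteSpace F]
    (φA : A →⋆ₐ[ℂ] D) (φB : B →⋆ₐ[ℂ] D) (ψB : B →⋆ₐ[ℂ] E) (ψC : C →⋆ₐ[ℂ] E)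
    (ιD : D →⋆ₐ[ℂ] F) (ιE : E →⋆ₐ[ℂ] F)
    (hamalg : ∀ b : B, ιD (φB b) = ιE (ψB b))
    (d₀ : D) (e₀ : E) (hd₀ : ‖d₀‖ = 1) (he₀ : ‖e₀‖ = 1)
    (LA : A → ℝ) (LB : B → ℝ) (LC : C → ℝ)
    (hLA : ∀ a, 0 ≤ LA a) (hLC : ∀ c, 0 ≤ LC c)
    (γD γE : ℝ) (hγD : 0 < γD) (hγE : 0 < γE)
    (hD₁ : ∀ a : A, IsSelfAdjoint a → ∀ ε : ℝ, 0 < ε → ∃ b : B, IsSelfAdjoint b ∧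
      LB b ≤ LA a + ε ∧ ‖φA a * d₀ - d₀ * φB b‖ ≤ γD * (LA a + ε))
    (hD₂ : ∀ b : B, IsSelfAdjoint b → ∀ ε : ℝ, 0 < ε → ∃ a : A, IsSelfAdjoint a ∧
      LA a ≤ LB b + ε ∧ ‖φA a * d₀ - d₀ * φB b‖ ≤ γD * (LB b + ε))
    (hE₁ : ∀ b : B, IsSelfAdjoint b → ∀ ε : ℝ, 0 < ε → ∃ c : C, IsSelfAdjoint c ∧
      LC c ≤ LB b + ε ∧ ‖ψB b * e₀ - e₀ * ψC c‖ ≤ γE * (LB b + ε))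
    (hE₂ : ∀ c : C, IsSelfAdjoint c → ∀ ε : ℝ, 0 < ε → ∃ b : B, IsSelfAdjoint b ∧
      LB b ≤ LC c + ε ∧ ‖ψB b * e₀ - e₀ * ψC c‖ ≤ γE * (LC c + ε)) :
    ∀ γ : ℝ, γD + γE ≤ γ →
      (∀ a : A, IsSelfAdjoint a → ∀ ε : ℝ, 0 < ε → ∃ c : C, IsSelfAdjoint c ∧
        LC c ≤ LA a + ε ∧
        ‖ιD (φA a) * (ιD d₀ * ιE e₀) - (ιD d₀ * ιE e₀) * ιE (ψC c)‖ ≤ γ * (LA a + ε)) ∧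
      (∀ c : C, IsSelfAdjoint c → ∀ ε : ℝ, 0 < ε → ∃ a : A, IsSelfAdjoint a ∧
        LA a ≤ LC c + ε ∧
        ‖ιD (φA a) * (ιD d₀ * ιE e₀) - (ιD d₀ * ιE e₀) * ιE (ψC c)‖ ≤ γ * (LC c + ε)) := by
  let _ : CStarAlgebra D := ⟨⟩
  let _ : CStarAlgebra E := ⟨⟩
  let _ : CStarAlgebra F := ⟨⟩
  intro γ hγ
  have hN := norm_amalgamated_commutator_le φB ψB ιD ιE hamalg hd₀.le he₀.le
  exact ⟨IsApproxBridge.trans (N₁ := fun a b ↦ ‖φA a * d₀ - d₀ * φB b‖)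
      (N₂ := fun b c ↦ ‖ψB b * e₀ - e₀ * ψC c‖) hD₁ hE₁ hγD.le hγE.le hγ hLA
      fun a b c ↦ hN (φA a) b (ψC c),
    IsApproxBridge.trans (N₁ := fun c b ↦ ‖ψB b * e₀ - e₀ * ψC c‖)
      (N₂ := fun b a ↦ ‖φA a * d₀ - d₀ * φB b‖) hE₂ hD₂ hγE.le hγD.le (by linarith) hLC
      fun c b a ↦ (hN (φA a) b (ψC c)).trans_eq (add_comm _ _)⟩

/-- Theorem 2.1: Given unital C*-algebras `A, B, C, D, E, F` with
unital *-homomorphisms `φA : A → D`, `φB : B → D`, `ψB : B → E`, `ψC : C → E`,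
`ιD : D → F`, `ιE : E → F` with `ιD ∘ φB = ιE ∘ ψB`, distinguished elements
`d₀ ∈ D`, `e₀ ∈ E` of norm one with `f₀ = ιD(d₀)·ιE(e₀) ≠ 0`, nonnegative
functions `L_A, L_B, L_C` and constants `γD, γE > 0` such that `γD⁻¹·N_D` is a
bridge for `(L_A, L_B)` and `γE⁻¹·N_E` is a bridge for `(L_B, L_C)` (in the sense
of the two-sided approximation property), then for every `γ ≥ γD + γE` the
seminorm `γ⁻¹·N_F` satisfies the two-sided approximation property for
`(L_A, L_C)`. -/
theorem stmt1 {A B C D E F : Type*}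
    [NormedRing A] [StarRing A] [CStarRing A] [NormedAlgebra ℂ A] [StarModule ℂ A] [CompleteSpace A]
    [NormedRing B] [StarRing B] [CStarRing B] [NormedAlgebra ℂ B] [StarModule ℂ B] [CompleteSpace B]
    [NormedRing C] [StarRing C] [CStarRing C] [NormedAlgebra ℂ C] [StarModule ℂ C] [CompleteSpace C]
    [NormedRing D] [StarRing D] [CStarRing D] [NormedAlgebra ℂ D] [StarModule ℂ D] [CompleteSpace D]
    [NormedRing E] [StarRing E] [CStarRing E] [NormedAlgebra ℂ E] [StarModule ℂ E] [CompleteSpace E]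
    [NormedRing F] [StarRing F] [CStarRing F] [NormedAlgebra ℂ F] [StarModule ℂ F] [CompleteSpace F]
    (φA : A →⋆ₐ[ℂ] D) (φB : B →⋆ₐ[ℂ] D) (ψB : B →⋆ₐ[ℂ] E) (ψC : C →⋆ₐ[ℂ] E)
    (ιD : D →⋆ₐ[ℂ] F) (ιE : E →⋆ₐ[ℂ] F)
    (hamalg : ∀ b : B, ιD (φB b) = ιE (ψB b))
    (d₀ : D) (e₀ : E) (hd₀ : ‖d₀‖ = 1) (he₀ : ‖e₀‖ = 1)
    (hf₀ : ιD d₀ * ιE e₀ ≠ 0)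
    (LA : A → ℝ) (LB : B → ℝ) (LC : C → ℝ)
    (hLA : ∀ a, 0 ≤ LA a) (hLB : ∀ b, 0 ≤ LB b) (hLC : ∀ c, 0 ≤ LC c)
    (γD γE : ℝ) (hγD : 0 < γD) (hγE : 0 < γE)
    (hD₁ : ∀ a : A, IsSelfAdjoint a → ∀ ε : ℝ, 0 < ε → ∃ b : B, IsSelfAdjoint b ∧
      LB b ≤ LA a + ε ∧ ‖φA a * d₀ - d₀ * φB b‖ ≤ γD * (LA a + ε))
    (hD₂ : ∀ b : B, IsSelfAdjoint b → ∀ ε : ℝ, 0 < ε → ∃ a : A, IsSelfAdjoint a ∧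
      LA a ≤ LB b + ε ∧ ‖φA a * d₀ - d₀ * φB b‖ ≤ γD * (LB b + ε))
    (hE₁ : ∀ b : B, IsSelfAdjoint b → ∀ ε : ℝ, 0 < ε → ∃ c : C, IsSelfAdjoint c ∧
      LC c ≤ LB b + ε ∧ ‖ψB b * e₀ - e₀ * ψC c‖ ≤ γE * (LB b + ε))
    (hE₂ : ∀ c : C, IsSelfAdjoint c → ∀ ε : ℝ, 0 < ε → ∃ b : B, IsSelfAdjoint b ∧
      LB b ≤ LC c + ε ∧ ‖ψB b * e₀ - e₀ * ψC c‖ ≤ γE * (LC c + ε)) :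
    ∀ γ : ℝ, γD + γE ≤ γ →
      (∀ a : A, IsSelfAdjoint a → ∀ ε : ℝ, 0 < ε → ∃ c : C, IsSelfAdjoint c ∧
        LC c ≤ LA a + ε ∧
        ‖ιD (φA a) * (ιD d₀ * ιE e₀) - (ιD d₀ * ιE e₀) * ιE (ψC c)‖ ≤ γ * (LA a + ε)) ∧
      (∀ c : C, IsSelfAdjoint c → ∀ ε : ℝ, 0 < ε → ∃ a : A, IsSelfAdjoint a ∧
        LA a ≤ LC c + ε ∧
        ‖ιD (φA a) * (ιD d₀ * ιE e₀) - (ιD d₀ * ιE e₀) * ιE (ψC c)‖ ≤ γ * (LC c + ε)) :=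
  stmt1_general φA φB ψB ψC ιD ιE hamalg d₀ e₀ hd₀ he₀ LA LB LC hLA hLC γD γE hγD hγE hD₁ hD₂ hE₁
    hE₂
end

section
/- Let A, B, C, D, E, F be unital C*-algebras, with unital *-homomorphisms φ_A : A → D, φ_B : B → D, ψ_B : B → E, ψ_C : C → E, ι_D : D → F, ι_E : E → F satisfying ι_D ∘ φ_B = ι_E ∘ ψ_B. Let d₀ ∈ D and e₀ ∈ E with ‖d₀‖ = 1 = ‖e₀‖, and set f₀ = ι_D(d₀)·ι_E(e₀). Define N_D(a,b) = ‖φ_A(a)·d₀ − d₀·φ_B(b)‖_D, N_E(b,c) = ‖ψ_B(b)·e₀ − e₀·ψ_C(c)‖_E, and N_F(a,c) = ‖ι_D(φ_A(a))·f₀ − f₀·ι_E(ψ_C(c))‖_F. Let L_A : A → ℝ, L_B : B → ℝ, L_C : C → ℝ be nonnegative functions and γ_D, γ_E > 0. Assume: for every self-adjoint a ∈ A and every ε > 0 there is a self-adjoint b ∈ B with L_B(b) ≤ L_A(a) + ε and N_D(a,b) ≤ γ_D·(L_A(a) + ε); and for every self-adjoint b ∈ B and every ε > 0 there is a self-adjoint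 c ∈ C with L_C(c) ≤ L_B(b) + ε and N_E(b,c) ≤ γ_E·(L_B(b) + ε). Then for every self-adjoint a ∈ A and every ε > 0 there exists a self-adjoint c ∈ C such that L_C(c) ≤ L_A(a) + 2ε and N_F(a,c) ≤ (γ_D + γ_E)·L_A(a) + ε·(γ_D + 2γ_E). -/
/-!
With `b` the intermediate element obtained from `a` and `c` the one obtained from `b`, the
amalgamation `ιD ∘ φB = ιE ∘ ψB` lets the middle term `ιD d₀ · ιD (φB b) · ιE e₀` be inserted
into the commutator of `ιD (φA a)` and `ιE (ψC c)` with `f₀`, splitting it into the two given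
commutators, each multiplied by a norm-one element and pushed through a contractive `*`-homomorphism.
-/

theorem norm_mul_mul_sub_mul_mul_le {R : Type*} [NonUnitalSeminormedRing R] (x d y e z : R) :
    ‖x * (d * e) - d * e * z‖ ≤ ‖x * d - d * y‖ * ‖e‖ + ‖d‖ * ‖y * e - e * z‖ :=
  calc ‖x * (d * e) - d * e * z‖ = ‖(x * d - d * y) * e + d * (y * e - e * z)‖ := by
        noncomm_ring
    _ ≤ ‖x * d - d * y‖ * ‖e‖ + ‖d‖ * ‖y * e - e * z‖ :=
        (norm_add_le _ _).trans (add_le_add (norm_mul_le _ _) (norm_mul_le _ _))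

section CStarAlgebra

variable {D E F : Type*}
    [NormedRing D] [StarRing D] [CStarRing D] [NormedAlgebra ℂ D] [StarModule ℂ D] [CompleteSpace D]
    [NormedRing E] [StarRing E] [CStarRing E] [NormedAlgebra ℂ E] [StarModule ℂ E] [CompleteSpace E]
    [NormedRing F] [StarRing F] [CStarRing F] [NormedAlgebra ℂ F] [StarModule ℂ F] [CompleteSpace F]

theorem StarAlgHom.norm_apply_le (ι : D →⋆ₐ[ℂ] F) (x : D) : ‖ι x‖ ≤ ‖x‖ := by
  let _ : CStarAlgebra D := {}
  let _ : CStarAlgebra F := {}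
  exact NonUnitalStarAlgHom.norm_apply_le ι x

theorem norm_map_mul_map_sub_le_of_map_eq (ιD : D →⋆ₐ[ℂ] F) (ιE : E →⋆ₐ[ℂ] F)
    {x d p : D} {q e z : E} (hpq : ιD p = ιE q) :
    ‖ιD x * (ιD d * ιE e) - ιD d * ιE e * ιE z‖
      ≤ ‖x * d - d * p‖ * ‖e‖ + ‖d‖ * ‖q * e - e * z‖ :=
  calc ‖ιD x * (ιD d * ιE e) - ιD d * ιE e * ιE z‖
      ≤ ‖ιD x * ιD d - ιD d * ιD p‖ * ‖ιE e‖ + ‖ιD d‖ * ‖ιD p * ιE e - ιE e * ιE z‖ :=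
        norm_mul_mul_sub_mul_mul_le _ _ _ _ _
    _ = ‖ιD (x * d - d * p)‖ * ‖ιE e‖ + ‖ιD d‖ * ‖ιE (q * e - e * z)‖ := by
        simp only [map_sub, map_mul, hpq]
    _ ≤ ‖x * d - d * p‖ * ‖e‖ + ‖d‖ * ‖q * e - e * z‖ := by
        gcongr <;> exact StarAlgHom.norm_apply_le _ _

end CStarAlgebra

theorem stmt2_general {A B C D E F : Type*}
    [NormedRing A] [StarRing A] [NormedAlgebra ℂ A]
    [NormedRing B] [StarRing B] [NormedAlgebra ℂ B]
    [NormedRing C] [StarRing C] [NormedAlgebra ℂ C]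
    [NormedRing D] [StarRing D] [CStarRing D] [NormedAlgebra ℂ D] [StarModule ℂ D] [CompleteSpace D]
    [NormedRing E] [StarRing E] [CStarRing E] [NormedAlgebra ℂ E] [StarModule ℂ E] [CompleteSpace E]
    [NormedRing F] [StarRing F] [CStarRing F] [NormedAlgebra ℂ F] [StarModule ℂ F] [CompleteSpace F]
    (φA : A →⋆ₐ[ℂ] D) (φB : B →⋆ₐ[ℂ] D) (ψB : B →⋆ₐ[ℂ] E) (ψC : C →⋆ₐ[ℂ] E)
    (ιD : D →⋆ₐ[ℂ] F) (ιE : E →⋆ₐ[ℂ] F)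
    (hamalg : ∀ b : B, ιD (φB b) = ιE (ψB b))
    (d₀ : D) (e₀ : E) (hd₀ : ‖d₀‖ = 1) (he₀ : ‖e₀‖ = 1)
    (LA : A → ℝ) (LB : B → ℝ) (LC : C → ℝ)
    (γD γE : ℝ) (hγE : 0 < γE)
    (hD₁ : ∀ a : A, IsSelfAdjoint a → ∀ ε : ℝ, 0 < ε → ∃ b : B, IsSelfAdjoint b ∧
      LB b ≤ LA a + ε ∧ ‖φA a * d₀ - d₀ * φB b‖ ≤ γD * (LA a + ε))
    (hE₁ : ∀ b : B, IsSelfAdjoint b → ∀ ε : ℝ, 0 < ε → ∃ c : C, IsSelfAdjoint c ∧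
      LC c ≤ LB b + ε ∧ ‖ψB b * e₀ - e₀ * ψC c‖ ≤ γE * (LB b + ε)) :
    ∀ a : A, IsSelfAdjoint a → ∀ ε : ℝ, 0 < ε → ∃ c : C, IsSelfAdjoint c ∧
      LC c ≤ LA a + 2 * ε ∧
      ‖ιD (φA a) * (ιD d₀ * ιE e₀) - (ιD d₀ * ιE e₀) * ιE (ψC c)‖
        ≤ (γD + γE) * LA a + ε * (γD + 2 * γE) := by
  intro a ha ε hε
  obtain ⟨b, hb, hLb, hNb⟩ := hD₁ a ha ε hε
  obtain ⟨c, hc, hLc, hNc⟩ := hE₁ b hb ε hε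
  refine ⟨c, hc, by linarith, ?_⟩
  calc ‖ιD (φA a) * (ιD d₀ * ιE e₀) - (ιD d₀ * ιE e₀) * ιE (ψC c)‖
      ≤ ‖φA a * d₀ - d₀ * φB b‖ * ‖e₀‖ + ‖d₀‖ * ‖ψB b * e₀ - e₀ * ψC c‖ :=
        norm_map_mul_map_sub_le_of_map_eq ιD ιE (hamalg b)
    _ ≤ γD * (LA a + ε) + γE * (LB b + ε) := by
        rw [hd₀, he₀, mul_one, one_mul]
        exact add_le_add hNb hNc
    _ ≤ γD * (LA a + ε) + γE * (LA a + 2 * ε) := by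
        gcongr γD * (LA a + ε) + γE * ?_
        linarith
    _ = (γD + γE) * LA a + ε * (γD + 2 * γE) := by ring

/-- The quantitative estimate from the proof of Theorem 2.1.  With
unital C*-algebras `A, B, C, D, E, F`, unital *-homomorphisms as indicated with
`ιD ∘ φB = ιE ∘ ψB`, distinguished norm-one elements `d₀ ∈ D`, `e₀ ∈ E`, and
`f₀ = ιD(d₀)·ιE(e₀)`: if for every self-adjoint `a ∈ A` and `ε > 0` there is a
self-adjoint `b ∈ B` with `L_B(b) ≤ L_A(a) + ε` and `N_D(a,b) ≤ γD·(L_A(a)+ε)`,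
and for every self-adjoint `b ∈ B` and `ε > 0` there is a self-adjoint `c ∈ C`
with `L_C(c) ≤ L_B(b) + ε` and `N_E(b,c) ≤ γE·(L_B(b)+ε)`, then for every
self-adjoint `a ∈ A` and `ε > 0` there is a self-adjoint `c ∈ C` with
`L_C(c) ≤ L_A(a) + 2ε` and `N_F(a,c) ≤ (γD+γE)·L_A(a) + ε·(γD+2γE)`. -/
theorem stmt2 {A B C D E F : Type*}
    [NormedRing A] [StarRing A] [CStarRing A] [NormedAlgebra ℂ A] [StarModule ℂ A] [CompleteSpace A]
    [NormedRing B] [StarRing B] [CStarRing B] [NormedAlgebra ℂ B] [StarModule ℂ B] [CompleteSpace B]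
    [NormedRing C] [StarRing C] [CStarRing C] [NormedAlgebra ℂ C] [StarModule ℂ C] [CompleteSpace C]
    [NormedRing D] [StarRing D] [CStarRing D] [NormedAlgebra ℂ D] [StarModule ℂ D] [CompleteSpace D]
    [NormedRing E] [StarRing E] [CStarRing E] [NormedAlgebra ℂ E] [StarModule ℂ E] [CompleteSpace E]
    [NormedRing F] [StarRing F] [CStarRing F] [NormedAlgebra ℂ F] [StarModule ℂ F] [CompleteSpace F]
    (φA : A →⋆ₐ[ℂ] D) (φB : B →⋆ₐ[ℂ] D) (ψB : B →⋆ₐ[ℂ] E) (ψC : C →⋆ₐ[ℂ] E)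
    (ιD : D →⋆ₐ[ℂ] F) (ιE : E →⋆ₐ[ℂ] F)
    (hamalg : ∀ b : B, ιD (φB b) = ιE (ψB b))
    (d₀ : D) (e₀ : E) (hd₀ : ‖d₀‖ = 1) (he₀ : ‖e₀‖ = 1)
    (LA : A → ℝ) (LB : B → ℝ) (LC : C → ℝ)
    (hLA : ∀ a, 0 ≤ LA a) (hLB : ∀ b, 0 ≤ LB b) (hLC : ∀ c, 0 ≤ LC c)
    (γD γE : ℝ) (hγD : 0 < γD) (hγE : 0 < γE)
    (hD₁ : ∀ a : A, IsSelfAdjoint a → ∀ ε : ℝ, 0 < ε → ∃ b : B, IsSelfAdjoint b ∧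
      LB b ≤ LA a + ε ∧ ‖φA a * d₀ - d₀ * φB b‖ ≤ γD * (LA a + ε))
    (hE₁ : ∀ b : B, IsSelfAdjoint b → ∀ ε : ℝ, 0 < ε → ∃ c : C, IsSelfAdjoint c ∧
      LC c ≤ LB b + ε ∧ ‖ψB b * e₀ - e₀ * ψC c‖ ≤ γE * (LB b + ε)) :
    ∀ a : A, IsSelfAdjoint a → ∀ ε : ℝ, 0 < ε → ∃ c : C, IsSelfAdjoint c ∧
      LC c ≤ LA a + 2 * ε ∧
      ‖ιD (φA a) * (ιD d₀ * ιE e₀) - (ιD d₀ * ιE e₀) * ιE (ψC c)‖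
        ≤ (γD + γE) * LA a + ε * (γD + 2 * γE) :=
  stmt2_general φA φB ψB ψC ιD ιE hamalg d₀ e₀ hd₀ he₀ LA LB LC γD γE hγE hD₁ hE₁
end

section
/- Let H be a finite-dimensional complex inner product space, let Q be a rank-one orthogonal projection on H (a self-adjoint idempotent of trace 1), and let A and B be operators on H. Then |tr(Q ∘ A) − tr(Q ∘ B)| ≤ ‖Q ∘ A − B ∘ Q‖, where ‖·‖ denotes the operator norm. -/
/-!
A self-adjoint idempotent of trace one is the rank-one projection `rankOne e e` onto a unit
vector `e`, since its trace is the dimension of its range. Then `tr (Q ∘ X) = ⟪e, X e⟫`, and as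
`Q e = e` and `⟪e, Q y⟫ = ⟪e, y⟫`, the difference of traces is `⟪e, (Q ∘ A - B ∘ Q) e⟫`, which is
bounded by the operator norm.
-/

open scoped InnerProductSpace
open InnerProductSpace Module

section

variable {𝕜 E F : Type*} [RCLike 𝕜] [NormedAddCommGroup E] [InnerProductSpace 𝕜 E]
  [FiniteDimensional 𝕜 E]

theorem Submodule.trace_starProjection (K : Submodule 𝕜 E) :
    LinearMap.trace 𝕜 E K.starProjection = finrank 𝕜 K := by
  let b := stdOrthonormalBasis 𝕜 K
  rw [b.starProjection_eq_sum_rankOne, ContinuousLinearMap.toLinearMap_sum, map_sum]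
  simp [trace_rankOne, Submodule.norm_coe, b.norm_eq_one]

theorem IsStarProjection.exists_eq_rankOne_of_trace_eq_one [CompleteSpace E] {p : E →L[𝕜] E}
    (hp : IsStarProjection p) (htr : LinearMap.trace 𝕜 E p = 1) :
    ∃ e : E, ‖e‖ = 1 ∧ p = rankOne 𝕜 e e := by
  obtain ⟨_, hp_eq⟩ := isStarProjection_iff_eq_starProjection_range.mp hp
  have hdim : finrank 𝕜 p.range = 1 := by
    rw [hp_eq, Submodule.trace_starProjection] at htr
    exact_mod_cast htr
  let b := (stdOrthonormalBasis 𝕜 p.range).reindex (finCongr hdim)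
  refine ⟨b 0, by rw [Submodule.norm_coe, b.norm_eq_one], ?_⟩
  rw [b.starProjection_eq_sum_rankOne, Fin.sum_univ_one] at hp_eq
  exact hp_eq

theorem LinearMap.trace_rankOne_comp [NormedAddCommGroup F] [InnerProductSpace 𝕜 F]
    [FiniteDimensional 𝕜 F] (x : E) (y : F) (T : E →L[𝕜] F) :
    LinearMap.trace 𝕜 E (rankOne 𝕜 x y ∘L T) = ⟪y, T x⟫_𝕜 := by
  rw [ContinuousLinearMap.toLinearMap_comp, LinearMap.trace_comp_comm',
    ← ContinuousLinearMap.toLinearMap_comp, comp_rankOne, trace_rankOne]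

end

/-- For a rank-one orthogonal projection `Q` (a self-adjoint idempotent
of trace 1) on a finite-dimensional complex inner product space `H`, and operators
`A, B` on `H`, one has `|tr(Q∘A) − tr(Q∘B)| ≤ ‖Q∘A − B∘Q‖` (operator norm). -/
theorem stmt4 {H : Type*}
    [NormedAddCommGroup H] [InnerProductSpace ℂ H] [FiniteDimensional ℂ H]
    (Q A B : H →L[ℂ] H) (hQsa : IsSelfAdjoint Q) (hQidem : Q ∘L Q = Q)
    (hQtr : LinearMap.trace ℂ H (Q : H →ₗ[ℂ] H) = 1) :
    ‖LinearMap.trace ℂ H ((Q ∘L A : H →L[ℂ] H) : H →ₗ[ℂ] H)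
      - LinearMap.trace ℂ H ((Q ∘L B : H →L[ℂ] H) : H →ₗ[ℂ] H)‖
      ≤ ‖Q ∘L A - B ∘L Q‖ := by
  obtain ⟨e, he, hQ⟩ :=
    (IsStarProjection.mk hQidem hQsa).exists_eq_rankOne_of_trace_eq_one hQtr
  have htrace_sub : LinearMap.trace ℂ H (Q ∘L A) - LinearMap.trace ℂ H (Q ∘L B)
      = ⟪e, (Q ∘L A - B ∘L Q) e⟫_ℂ := by
    subst hQ
    rw [LinearMap.trace_rankOne_comp, LinearMap.trace_rankOne_comp]
    simp [he]
  rw [htrace_sub]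
  calc ‖⟪e, (Q ∘L A - B ∘L Q) e⟫_ℂ‖ ≤ ‖e‖ * ‖(Q ∘L A - B ∘L Q) e‖ := norm_inner_le_norm _ _
    _ ≤ ‖Q ∘L A - B ∘L Q‖ := by simpa [he] using (Q ∘L A - B ∘L Q).le_opNorm e
end
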